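/- For N > 2 and k > 1 (with k < N), the clique covering numbers of Johnson graphs satisfy the recursion θ(J(N,k)) ≤ θ(J(N−1,k−1)) + θ(J(N−1,k)). -/

import Mathlib

/-!
A `k`-subset of `Fin (N + 1)` either contains the last point or not. Deleting it identifies the
first kind with `J(N, k - 1)`, and the second kind is `J(N, k)` itself; both identifications
preserve adjacency, i.e. are graph homomorphisms into `J(N + 1, k)`. Their ranges cover
`J(N + 1, k)` and homomorphisms send cliques to cliques, so the images of optimal clique covers
of the two smaller graphs form a clique cover of `J(N + 1, k)`.
-/

/-- The Johnson graph `J(N, k)`. -/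
def johnson (N k : ℕ) : SimpleGraph {S : Finset (Fin N) // S.card = k} where
  Adj S T := S ≠ T ∧ (S.1 ∩ T.1).card = k - 1
  symm := by
    refine ⟨fun S T h => ?_⟩
    exact ⟨h.1.symm, by rw [Finset.inter_comm]; exact h.2⟩
  loopless := by
    refine ⟨fun S h => ?_⟩
    exact h.1 rfl

/-- The (vertex) clique covering number of a graph. -/
noncomputable def theta {V : Type*} (G : SimpleGraph V) : ℕ :=
  sInf {n | ∃ 𝒞 : Finset (Set V), 𝒞.card = n ∧ (∀ C ∈ 𝒞, G.IsClique C) ∧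
    ∀ v, ∃ C ∈ 𝒞, v ∈ C}

namespace SimpleGraph

variable {V W : Type*} {G : SimpleGraph V} {H : SimpleGraph W}

theorem IsClique.image_hom (f : H →g G) {s : Set W} (hs : H.IsClique s) :
    G.IsClique (f '' s) := by
  rintro _ ⟨a, ha, rfl⟩ _ ⟨b, hb, rfl⟩ hab
  exact f.map_adj (hs ha hb (ne_of_apply_ne f hab))

end SimpleGraph

def IsCliqueCover {V : Type*} (G : SimpleGraph V) (𝒞 : Finset (Set V)) : Prop :=
  (∀ C ∈ 𝒞, G.IsClique C) ∧ ∀ v, ∃ C ∈ 𝒞, v ∈ C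

section CliqueCover

variable {V W₁ W₂ : Type*} {G : SimpleGraph V} {G₁ : SimpleGraph W₁} {G₂ : SimpleGraph W₂}

theorem IsCliqueCover.theta_le_card {𝒞 : Finset (Set V)} (h : IsCliqueCover G 𝒞) :
    theta G ≤ 𝒞.card :=
  Nat.sInf_le ⟨𝒞, rfl, h⟩

theorem isCliqueCover_singletons [Finite V] (G : SimpleGraph V) :
    IsCliqueCover G (Set.finite_range fun v : V ↦ ({v} : Set V)).toFinset := by
  refine ⟨fun C hC ↦ ?_, fun v ↦ ⟨{v}, by simp, rfl⟩⟩
  obtain ⟨v, rfl⟩ := (Set.Finite.mem_toFinset _).1 hC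
  exact G.isClique_singleton v

theorem exists_isCliqueCover_card_eq_theta [Finite V] (G : SimpleGraph V) :
    ∃ 𝒞, IsCliqueCover G 𝒞 ∧ 𝒞.card = theta G := by
  obtain ⟨𝒞, hcard, h𝒞⟩ : theta G ∈ {n | ∃ 𝒞 : Finset (Set V), 𝒞.card = n ∧ IsCliqueCover G 𝒞} :=
    Nat.sInf_mem ⟨_, _, rfl, isCliqueCover_singletons G⟩
  exact ⟨𝒞, h𝒞, hcard⟩

open Classical in
theorem IsCliqueCover.union_image {𝒞₁ : Finset (Set W₁)} {𝒞₂ : Finset (Set W₂)}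
    (h₁ : IsCliqueCover G₁ 𝒞₁) (h₂ : IsCliqueCover G₂ 𝒞₂) (f₁ : G₁ →g G) (f₂ : G₂ →g G)
    (hf : ∀ v, v ∈ Set.range f₁ ∨ v ∈ Set.range f₂) :
    IsCliqueCover G (𝒞₁.image (f₁ '' ·) ∪ 𝒞₂.image (f₂ '' ·)) := by
  constructor
  · simp only [Finset.mem_union, Finset.mem_image]
    rintro _ (⟨C, hC, rfl⟩ | ⟨C, hC, rfl⟩)
    · exact (h₁.1 C hC).image_hom f₁
    · exact (h₂.1 C hC).image_hom f₂
  · intro v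
    rcases hf v with ⟨a, rfl⟩ | ⟨b, rfl⟩
    · obtain ⟨C, hC, haC⟩ := h₁.2 a
      exact ⟨f₁ '' C, Finset.mem_union_left _ (Finset.mem_image_of_mem _ hC), a, haC, rfl⟩
    · obtain ⟨C, hC, hbC⟩ := h₂.2 b
      exact ⟨f₂ '' C, Finset.mem_union_right _ (Finset.mem_image_of_mem _ hC), b, hbC, rfl⟩

theorem theta_le_add_of_hom [Finite W₁] [Finite W₂] (f₁ : G₁ →g G) (f₂ : G₂ →g G)
    (hf : ∀ v, v ∈ Set.range f₁ ∨ v ∈ Set.range f₂) : theta G ≤ theta G₁ + theta G₂ := by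
  classical
  obtain ⟨𝒞₁, h₁, hcard₁⟩ := exists_isCliqueCover_card_eq_theta G₁
  obtain ⟨𝒞₂, h₂, hcard₂⟩ := exists_isCliqueCover_card_eq_theta G₂
  rw [← hcard₁, ← hcard₂]
  calc theta G ≤ (𝒞₁.image (f₁ '' ·) ∪ 𝒞₂.image (f₂ '' ·)).card :=
        (h₁.union_image h₂ f₁ f₂ hf).theta_le_card
    _ ≤ (𝒞₁.image (f₁ '' ·)).card + (𝒞₂.image (f₂ '' ·)).card := Finset.card_union_le _ _
    _ ≤ 𝒞₁.card + 𝒞₂.card := add_le_add Finset.card_image_le Finset.card_image_le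

end CliqueCover

theorem Finset.exists_eq_map_castSuccEmb {n : ℕ} {s : Finset (Fin (n + 1))}
    (hs : Fin.last n ∉ s) : ∃ t : Finset (Fin n), s = t.map Fin.castSuccEmb := by
  have hsub : s ⊆ Finset.univ.map Fin.castSuccEmb := fun x hx ↦ by
    simpa [Fin.exists_castSucc_eq] using ne_of_mem_of_not_mem hx hs
  obtain ⟨t, -, hst⟩ := Finset.subset_map_iff.1 hsub
  exact ⟨t, hst⟩

namespace johnson

variable {n j : ℕ}

/-- Adjacency forces `1 ≤ j`, so the truncated `j - 1` in `johnson` causes no trouble. -/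
theorem card_inter_add_one_of_adj {S T : {S : Finset (Fin n) // S.card = j}}
    (h : (johnson n j).Adj S T) : (S.1 ∩ T.1).card + 1 = j := by
  have hST : ¬ S.1 ⊆ T.1 := fun hST ↦
    h.1 (Subtype.ext (Finset.eq_of_subset_of_card_le hST (T.2.trans S.2.symm).le))
  have hlt : (S.1 ∩ T.1).card < S.1.card := Finset.card_lt_card <|
    Finset.inter_subset_left.ssubset_of_ne fun he ↦ hST (Finset.inter_eq_left.1 he)
  have := h.2
  omega

theorem last_notMem_map_castSuccEmb (s : Finset (Fin n)) :
    Fin.last n ∉ s.map Fin.castSuccEmb := by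
  simp [Fin.castSucc_ne_last]

def insertLast : johnson n j →g johnson (n + 1) (j + 1) where
  toFun S := ⟨insert (Fin.last n) (S.1.map Fin.castSuccEmb), by
    rw [Finset.card_insert_of_notMem (last_notMem_map_castSuccEmb _), Finset.card_map, S.2]⟩
  map_rel' {S T} h := by
    refine ⟨fun hST ↦ h.1 (Subtype.ext ?_), ?_⟩
    · have := congrArg (fun s ↦ (Subtype.val s).erase (Fin.last n)) hST
      simp only [Finset.erase_insert (last_notMem_map_castSuccEmb _)] at this
      exact Finset.map_injective _ this
    · show (insert (Fin.last n) (S.1.map Fin.castSuccEmb) ∩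
        insert (Fin.last n) (T.1.map Fin.castSuccEmb)).card = j + 1 - 1
      rw [← Finset.insert_inter_distrib, ← Finset.map_inter,
        Finset.card_insert_of_notMem (last_notMem_map_castSuccEmb _), Finset.card_map,
        card_inter_add_one_of_adj h, Nat.add_sub_cancel]

def castSucc : johnson n j →g johnson (n + 1) j where
  toFun S := ⟨S.1.map Fin.castSuccEmb, by rw [Finset.card_map, S.2]⟩
  map_rel' {S T} h := by
    refine ⟨fun hST ↦ h.1 (Subtype.ext (Finset.map_injective _ (congrArg Subtype.val hST))), ?_⟩
    simpa [← Finset.map_inter] using h.2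

theorem mem_range_insertLast_or_mem_range_castSucc
    (v : {S : Finset (Fin (n + 1)) // S.card = j + 1}) :
    v ∈ Set.range (insertLast (n := n) (j := j)) ∨ v ∈ Set.range (castSucc (n := n)) := by
  by_cases hv : Fin.last n ∈ v.1
  · obtain ⟨t, ht⟩ := Finset.exists_eq_map_castSuccEmb (Finset.notMem_erase (Fin.last n) v.1)
    have hcard : t.card = j := by
      rw [← Finset.card_map Fin.castSuccEmb, ← ht, Finset.card_erase_of_mem hv, v.2,
        Nat.add_sub_cancel]
    refine .inl ⟨⟨t, hcard⟩, Subtype.ext ?_⟩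
    show insert (Fin.last n) (t.map Fin.castSuccEmb) = v.1
    rw [← ht, Finset.insert_erase hv]
  · obtain ⟨t, ht⟩ := Finset.exists_eq_map_castSuccEmb hv
    exact .inr ⟨⟨t, by rw [← Finset.card_map Fin.castSuccEmb, ← ht, v.2]⟩, Subtype.ext ht.symm⟩

end johnson

theorem theta_johnson_succ_le (n j : ℕ) :
    theta (johnson (n + 1) (j + 1)) ≤ theta (johnson n j) + theta (johnson n (j + 1)) :=
  theta_le_add_of_hom johnson.insertLast johnson.castSucc
    johnson.mem_range_insertLast_or_mem_range_castSucc

theorem theta_johnson_recursion_general (N k : ℕ) (hk : 1 < k) (hkN : k < N) :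
    theta (johnson N k) ≤ theta (johnson (N - 1) (k - 1)) + theta (johnson (N - 1) k) := by
  obtain ⟨n, rfl⟩ := Nat.exists_eq_add_one_of_ne_zero (Nat.ne_zero_of_lt hkN)
  obtain ⟨j, rfl⟩ := Nat.exists_eq_add_one_of_ne_zero (Nat.ne_zero_of_lt hk)
  exact theta_johnson_succ_le n j

/-- For `N > 2` and `1 < k < N`,
`θ(J(N, k)) ≤ θ(J(N-1, k-1)) + θ(J(N-1, k))`. -/
theorem theta_johnson_recursion (N k : ℕ) (hN : 2 < N) (hk : 1 < k) (hkN : k < N) :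
    theta (johnson N k) ≤ theta (johnson (N - 1) (k - 1)) + theta (johnson (N - 1) k) :=
  theta_johnson_recursion_general N k hk hkN
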